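/- Let (X,μ) be a connected weighted graph with bounded row sums, fix x₀, x ∈ X and λ > R_μ, where R_μ := 1/limsup_{n→∞} (μ^{(n)}(x,y))^{1/n} is the convergence parameter (independent of x,y by connectedness). Then H(t) := e^{−t} ∑_{n=0}^∞ μ^{(n)}(x₀,x) (λt)^n / n! tends to +∞ as t → +∞. -/

import Mathlib

open Filter MeasureTheory ProbabilityTheory
open scoped ENNReal NNReal

/-- `n`-step weights (matrix powers) of a weight kernel `μ` on a countable set. -/
noncomputable def matPow {X : Type*} [DecidableEq X] (μ : X → X → ℝ≥0∞) :
    ℕ → X → X → ℝ≥0∞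
  | 0, x, y => if x = y then 1 else 0
  | n + 1, x, y => ∑' z, matPow μ n x z * μ z y

/-- `(X, μ)` has bounded row sums. -/
def bddRows {X : Type*} (μ : X → X → ℝ≥0∞) : Prop :=
  ∃ K : ℝ≥0∞, K ≠ ⊤ ∧ ∀ x, ∑' y, μ x y ≤ K

/-- `(X, μ)` is connected. -/
def connectedW {X : Type*} [DecidableEq X] (μ : X → X → ℝ≥0∞) : Prop :=
  ∀ x y, ∃ n, 0 < n ∧ 0 < matPow μ n x y

/-- `limsup_n (μ^{(n)}(x,y))^{1/n}`, the reciprocal of the convergence parameter. -/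
noncomputable def lsRoot {X : Type*} [DecidableEq X] (μ : X → X → ℝ≥0∞) (x y : X) : ℝ≥0∞ :=
  Filter.limsup (fun n : ℕ => matPow μ n x y ^ (n : ℝ)⁻¹) Filter.atTop

/-- The convergence parameter `R = 1 / limsup_n (μ^{(n)}(x,y))^{1/n}`. -/
noncomputable def convR {X : Type*} [DecidableEq X] (μ : X → X → ℝ≥0∞) (x y : X) : ℝ≥0∞ :=
  (lsRoot μ x y)⁻¹

open Classical in
/-- Restriction of a weight kernel to a subset (extended by `0`). -/
noncomputable def restrictW {X : Type*} (μ : X → X → ℝ≥0∞) (A : Set X) : X → X → ℝ≥0∞ :=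
  fun x y => if x ∈ A ∧ y ∈ A then μ x y else 0
/-- The expected number of particles at site `x` at time `t` of the `λ`-branching random
walk on `(X, μ)` started from one particle at `x₀`:
`H(t) = e^{-t} ∑_{n} μ^{(n)}(x₀, x) (λ t)^n / n!`. -/
noncomputable def expParticles {X : Type*} [DecidableEq X] (μ : X → X → ℝ≥0∞)
    (lam : ℝ) (x₀ x : X) (t : ℝ) : ℝ≥0∞ :=
  ENNReal.ofReal (Real.exp (-t)) *
    ∑' n : ℕ, matPow μ n x₀ x * ENNReal.ofReal (lam * t) ^ n / (Nat.factorial n : ℝ≥0∞)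

open Finset
open scoped Nat

/-!
Choose `r` with `1/λ < r < limsup_n (μ⁽ⁿ⁾(x₀,x))^{1/n}`, so that `μ⁽ᴺ⁾(x₀,x) ≥ rᴺ` for
infinitely many `N`, and a path from `x` back to `x₀` of length `k` and weight `c > 0`. Going
around the loop `j` times gives `μ⁽ᴺ⁺ʲᵈ⁾(x₀,x) ≥ rᴺ (c rᴺ)ʲ` with `d = k + N`, and for `N` large
`λᵈ c rᴺ > 1`; hence `μ⁽ⁿ⁾(x₀,x) λⁿ ≥ C αⁿ` along the progression `N + dℕ` for some `α > 1`.
For `s ≥ 1`, every term `sᵐ/m!` with `m ≥ N` of the exponential series is at most `sᵈ` times a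
term of its subseries over `N + dℕ`, so `H(t) ≳ e^{-t} e^{αt} / (αt)ᵈ → ∞`.
-/

section MatPow

variable {X : Type*} [DecidableEq X] (μ : X → X → ℝ≥0∞)

theorem matPow_add (m n : ℕ) (x y : X) :
    matPow μ (m + n) x y = ∑' z, matPow μ m x z * matPow μ n z y := by
  induction n generalizing y with
  | zero => simp [matPow, mul_ite]
  | succ n ih =>
    calc matPow μ (m + n + 1) x y
        = ∑' w, ∑' z, matPow μ m x z * matPow μ n z w * μ w y := by
          simp only [matPow, ih, ENNReal.tsum_mul_right]
      _ = ∑' z, matPow μ m x z * matPow μ (n + 1) z y := by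
          rw [ENNReal.tsum_comm]
          simp only [matPow, mul_assoc, ENNReal.tsum_mul_left]

theorem matPow_mul_le_matPow_add (m n : ℕ) (x y z : X) :
    matPow μ m x z * matPow μ n z y ≤ matPow μ (m + n) x y :=
  (matPow_add μ m n x y).symm ▸ ENNReal.le_tsum z

theorem matPow_mul_pow_le (m n j : ℕ) (x y : X) :
    matPow μ m x y * (matPow μ n y x * matPow μ m x y) ^ j ≤ matPow μ (m + j * (n + m)) x y := by
  induction j with
  | zero => simp
  | succ j ih =>
    calc matPow μ m x y * (matPow μ n y x * matPow μ m x y) ^ (j + 1)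
        = matPow μ m x y * (matPow μ n y x * matPow μ m x y) ^ j * matPow μ n y x *
            matPow μ m x y := by ring
      _ ≤ matPow μ (m + j * (n + m)) x y * matPow μ n y x * matPow μ m x y := by gcongr
      _ ≤ matPow μ (m + j * (n + m) + n) x x * matPow μ m x y := by
          gcongr; exact matPow_mul_le_matPow_add μ _ _ _ _ _
      _ ≤ matPow μ (m + (j + 1) * (n + m)) x y := by
          convert matPow_mul_le_matPow_add μ _ _ _ _ _ using 2; ring

end MatPow

theorem ENNReal.frequently_pow_le_of_lt_limsup {a : ℕ → ℝ≥0∞} {r : ℝ≥0∞}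
    (hr : r < limsup (fun n : ℕ => a n ^ (n : ℝ)⁻¹) atTop) : ∃ᶠ n in atTop, r ^ n ≤ a n := by
  refine ((frequently_lt_of_lt_limsup (by isBoundedDefault) hr).and_eventually
    (eventually_ne_atTop 0)).mono fun n ⟨hlt, hn⟩ => ?_
  calc r ^ n ≤ (a n ^ (n : ℝ)⁻¹) ^ n := by gcongr
    _ = a n := by
      rw [← ENNReal.rpow_natCast, ← ENNReal.rpow_mul, inv_mul_cancel₀ (by exact_mod_cast hn),
        ENNReal.rpow_one]

theorem ENNReal.tsum_pow_div_factorial_add_le {y : ℝ≥0∞} (hy : 1 ≤ y) (N : ℕ) {d : ℕ}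
    (hd : 0 < d) :
    ∑' m : ℕ, y ^ (m + N) / (m + N)! ≤ d * y ^ d * ∑' j : ℕ, y ^ (N + j * d) / (N + j * d)! := by
  have : NeZero d := ⟨hd.ne'⟩
  let g : ℕ → ℝ≥0∞ := fun m => y ^ (m + N) / (m + N)!
  have hterm (j : ℕ) (i : Fin d) :
      y ^ (j * d + i + N) / (j * d + i + N)! ≤ y ^ d * (y ^ (N + j * d) / (N + j * d)!) := by
    rw [← mul_div_assoc, ← pow_add]
    exact ENNReal.div_le_div (pow_le_pow_right₀ hy (by omega))
      (Nat.cast_le.2 (Nat.factorial_le (by omega)))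
  calc ∑' m, g m = ∑' (j : ℕ) (i : Fin d), g (j * d + i) := by
        rw [← (Nat.divModEquiv d).symm.tsum_eq g, ENNReal.tsum_prod']; rfl
    _ ≤ ∑' (j : ℕ) (_ : Fin d), y ^ d * (y ^ (N + j * d) / (N + j * d)!) := by
        gcongr with j i; exact hterm j i
    _ = d * y ^ d * ∑' j : ℕ, y ^ (N + j * d) / (N + j * d)! := by
        simp only [tsum_fintype, sum_const, card_univ, Fintype.card_fin, nsmul_eq_mul,
          ENNReal.tsum_mul_left, mul_assoc]

theorem ENNReal.ofReal_exp_eq_tsum {s : ℝ} (hs : 0 ≤ s) :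
    ENNReal.ofReal (Real.exp s) = ∑' n : ℕ, ENNReal.ofReal s ^ n / n ! := by
  have h := NormedSpace.expSeries_div_hasSum_exp s
  rw [← Real.exp_eq_exp_ℝ] at h
  rw [← h.tsum_eq, ENNReal.ofReal_tsum_of_nonneg (fun n => by positivity) h.summable]
  congr 1 with n
  rw [ENNReal.ofReal_div_of_pos (by positivity), ENNReal.ofReal_pow hs, ENNReal.ofReal_natCast]

theorem ENNReal.ofReal_exp_sub_div_le_tsum {s : ℝ} (hs : 1 ≤ s) (N : ℕ) {d : ℕ} (hd : 0 < d) :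
    ENNReal.ofReal ((Real.exp s - ∑ i ∈ range N, s ^ i / i !) / (d * s ^ d)) ≤
      ∑' j : ℕ, ENNReal.ofReal s ^ (N + j * d) / (N + j * d)! := by
  have hs0 : 0 ≤ s := zero_le_one.trans hs
  have hpartial : ENNReal.ofReal (∑ i ∈ range N, s ^ i / i !) =
      ∑ i ∈ range N, ENNReal.ofReal s ^ i / i ! := by
    rw [ENNReal.ofReal_sum_of_nonneg fun i _ => by positivity]
    refine sum_congr rfl fun i _ => ?_
    rw [ENNReal.ofReal_div_of_pos (by positivity), ENNReal.ofReal_pow hs0, ENNReal.ofReal_natCast]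
  rw [ENNReal.ofReal_div_of_pos (by positivity), ENNReal.ofReal_mul (by positivity),
    ENNReal.ofReal_natCast, ENNReal.ofReal_pow hs0]
  refine ENNReal.div_le_of_le_mul' ?_
  calc ENNReal.ofReal (Real.exp s - ∑ i ∈ range N, s ^ i / i !)
      ≤ ∑' m : ℕ, ENNReal.ofReal s ^ (m + N) / (m + N)! := by
        rw [ENNReal.ofReal_sub _ (by positivity), hpartial, ENNReal.ofReal_exp_eq_tsum hs0,
          ← ENNReal.summable.sum_add_tsum_nat_add' (k := N), ENNReal.add_sub_cancel_left]
        exact hpartial ▸ ENNReal.ofReal_ne_top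
    _ ≤ _ := ENNReal.tsum_pow_div_factorial_add_le (ENNReal.one_le_ofReal.2 hs) N hd

theorem tendsto_exp_neg_mul_sum_pow_div_factorial (α : ℝ) (N : ℕ) :
    Tendsto (fun t => Real.exp (-t) * ∑ i ∈ range N, (α * t) ^ i / i !) atTop (nhds 0) := by
  have h (i : ℕ) : Tendsto (fun t => α ^ i / i ! * (t ^ i * Real.exp (-t))) atTop (nhds 0) := by
    simpa using (Real.tendsto_pow_mul_exp_neg_atTop_nhds_zero i).const_mul (α ^ i / i !)
  have hsum := tendsto_finsetSum (range N) fun i _ => h i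
  rw [sum_const_zero] at hsum
  refine hsum.congr fun t => ?_
  rw [mul_sum]
  exact sum_congr rfl fun i _ => by ring

theorem tendsto_exp_neg_mul_exp_sub_sum_div_atTop {α : ℝ} (hα : 1 < α) (N : ℕ) {d : ℕ}
    (hd : 0 < d) :
    Tendsto (fun t => Real.exp (-t) *
      ((Real.exp (α * t) - ∑ i ∈ range N, (α * t) ^ i / i !) / (d * (α * t) ^ d))) atTop atTop := by
  have hα0 : 0 < α := one_pos.trans hα
  have hmain : Tendsto (fun t => Real.exp ((α - 1) * t) / (d * (α * t) ^ d)) atTop atTop := by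
    have hc : 0 < ((α - 1) / α) ^ d / d := by have := sub_pos.2 hα; positivity
    refine (((Real.tendsto_exp_div_pow_atTop d).comp
      (tendsto_id.const_mul_atTop (sub_pos.2 hα))).const_mul_atTop hc).congr' ?_
    filter_upwards [eventually_gt_atTop 0] with t ht
    simp only [Function.comp_apply, id]
    generalize Real.exp ((α - 1) * t) = E
    rw [show (α - 1) * t = (α - 1) / α * (α * t) by field_simp, mul_pow]
    have : α - 1 ≠ 0 := (sub_pos.2 hα).ne'
    field_simp
  have hsmall : Tendsto (fun t => Real.exp (-t) * (∑ i ∈ range N, (α * t) ^ i / i !) *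
      (d * (α * t) ^ d)⁻¹) atTop (nhds 0) := by
    simpa using (tendsto_exp_neg_mul_sum_pow_div_factorial α N).mul
      (tendsto_inv_atTop_zero.comp (((tendsto_pow_atTop hd.ne').comp
        (tendsto_id.const_mul_atTop hα0)).const_mul_atTop (by positivity : (0 : ℝ) < d)))
  refine (hmain.atTop_add hsmall.neg).congr fun t => ?_
  rw [show (α - 1) * t = -t + α * t by ring, Real.exp_add]
  ring

/-- `poissonTransform b t` is the mean of `b (Nₜ)` for a Poisson variable `Nₜ` of mean `t`. -/
noncomputable def poissonTransform (b : ℕ → ℝ≥0∞) (t : ℝ) : ℝ≥0∞ :=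
  ENNReal.ofReal (Real.exp (-t)) * ∑' n : ℕ, b n * ENNReal.ofReal t ^ n / n !

theorem expParticles_eq_poissonTransform {X : Type*} [DecidableEq X] (μ : X → X → ℝ≥0∞)
    {lam : ℝ} (hlam : 0 ≤ lam) (x₀ x : X) (t : ℝ) :
    expParticles μ lam x₀ x t =
      poissonTransform (fun n => matPow μ n x₀ x * ENNReal.ofReal lam ^ n) t := by
  simp only [expParticles, poissonTransform, ENNReal.ofReal_mul hlam, mul_pow, mul_assoc]

theorem tendsto_poissonTransform_of_ofReal_mul_pow_le {b : ℕ → ℝ≥0∞} {C α : ℝ} (hC : 0 < C)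
    (hα : 1 < α) (N : ℕ) {d : ℕ} (hd : 0 < d)
    (hb : ∀ j, ENNReal.ofReal (C * α ^ (N + j * d)) ≤ b (N + j * d)) :
    Tendsto (poissonTransform b) atTop (nhds ⊤) := by
  have hα0 : 0 < α := one_pos.trans hα
  refine tendsto_nhds_top_mono (ENNReal.tendsto_ofReal_atTop.comp
    ((tendsto_exp_neg_mul_exp_sub_sum_div_atTop hα N hd).const_mul_atTop hC)) ?_
  filter_upwards [eventually_ge_atTop α⁻¹] with t ht
  have hαt : 1 ≤ α * t := by rwa [← inv_le_iff_one_le_mul₀' hα0]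
  have ht0 : 0 ≤ t := (inv_pos.2 hα0).le.trans ht
  calc ENNReal.ofReal (C * (Real.exp (-t) *
        ((Real.exp (α * t) - ∑ i ∈ range N, (α * t) ^ i / i !) / (d * (α * t) ^ d))))
      = ENNReal.ofReal (Real.exp (-t)) * (ENNReal.ofReal C * ENNReal.ofReal
        ((Real.exp (α * t) - ∑ i ∈ range N, (α * t) ^ i / i !) / (d * (α * t) ^ d))) := by
        rw [← ENNReal.ofReal_mul hC.le, ← ENNReal.ofReal_mul (Real.exp_nonneg _)]; ring_nf
    _ ≤ ENNReal.ofReal (Real.exp (-t)) * (ENNReal.ofReal C *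
        ∑' j : ℕ, ENNReal.ofReal (α * t) ^ (N + j * d) / (N + j * d)!) := by
        gcongr; exact ENNReal.ofReal_exp_sub_div_le_tsum hαt N hd
    _ = ENNReal.ofReal (Real.exp (-t)) * ∑' j : ℕ,
        ENNReal.ofReal (C * α ^ (N + j * d)) * ENNReal.ofReal t ^ (N + j * d) / (N + j * d)! := by
        rw [← ENNReal.tsum_mul_left]
        refine congrArg _ (tsum_congr fun j => ?_)
        rw [ENNReal.ofReal_mul hα0.le, ENNReal.ofReal_mul hC.le, ENNReal.ofReal_pow hα0.le]
        simp only [div_eq_mul_inv]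
        ring
    _ ≤ ENNReal.ofReal (Real.exp (-t)) * ∑' j : ℕ,
        b (N + j * d) * ENNReal.ofReal t ^ (N + j * d) / (N + j * d)! := by
        gcongr with j; exact hb j
    _ ≤ poissonTransform b t := by
        rw [poissonTransform]
        refine mul_le_mul_right (ENNReal.tsum_comp_le_tsum_of_injective (fun i j h => ?_)
          fun n => b n * ENNReal.ofReal t ^ n / n !) _
        simpa [hd.ne'] using h

theorem tendsto_poissonTransform_of_mul_pow_le {b : ℕ → ℝ≥0∞} {C A : ℝ≥0∞} (hC : C ≠ 0)
    (hA : 1 < A) (N : ℕ) {d : ℕ} (hd : 0 < d) (hb : ∀ j, C * A ^ j ≤ b (N + j * d)) :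
    Tendsto (poissonTransform b) atTop (nhds ⊤) := by
  obtain ⟨A', hA'1, hA'A⟩ := exists_between hA
  obtain ⟨C', hC'0, hC'C⟩ := exists_between (pos_iff_ne_zero.2 hC)
  have hA'r : 1 < A'.toReal := by
    simpa using (ENNReal.toReal_lt_toReal ENNReal.one_ne_top hA'A.ne_top).2 hA'1
  have hC'r : 0 < C'.toReal := ENNReal.toReal_pos hC'0.ne' hC'C.ne_top
  set α := A'.toReal ^ (d⁻¹ : ℝ)
  have hαd : α ^ d = A'.toReal := Real.rpow_inv_natCast_pow ENNReal.toReal_nonneg hd.ne'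
  have hα : 1 < α := Real.one_lt_rpow hA'r (by positivity)
  refine tendsto_poissonTransform_of_ofReal_mul_pow_le (C := C'.toReal / α ^ N) (by positivity)
    hα N hd fun j => ?_
  calc ENNReal.ofReal (C'.toReal / α ^ N * α ^ (N + j * d)) = C' * A' ^ j := by
        have : α ^ N ≠ 0 := by positivity
        rw [pow_add, pow_mul', hαd, ← mul_assoc, div_mul_cancel₀ _ this,
          ENNReal.ofReal_mul hC'r.le, ENNReal.ofReal_pow ENNReal.toReal_nonneg,
          ENNReal.ofReal_toReal hC'C.ne_top, ENNReal.ofReal_toReal hA'A.ne_top]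
    _ ≤ C * A ^ j := by gcongr
    _ ≤ b (N + j * d) := hb j

theorem expParticles_tendsto_top_of_supercritical_general
    {X : Type*} [DecidableEq X]
    (μ : X → X → ℝ≥0∞) (hconn : connectedW μ)
    (x₀ x : X) (lam : ℝ)
    (hsup : convR μ x₀ x < ENNReal.ofReal lam) :
    Tendsto (expParticles μ lam x₀ x) atTop (nhds (⊤ : ℝ≥0∞)) := by
  have hlam : 0 < lam := ENNReal.ofReal_pos.1 (pos_of_gt hsup)
  obtain ⟨r, hlr, hr⟩ := exists_between (ENNReal.inv_lt_iff_inv_lt.1 hsup)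
  have hL : 1 < ENNReal.ofReal lam * r := by
    rwa [inv_eq_one_div, ENNReal.div_lt_iff (Or.inl (by simpa using hlam))
      (Or.inl ENNReal.ofReal_ne_top), mul_comm] at hlr
  obtain ⟨k, hk, hc⟩ := hconn x x₀
  have hB : ENNReal.ofReal lam ^ k * matPow μ k x x₀ ≠ 0 :=
    mul_ne_zero (pow_ne_zero k (ENNReal.ofReal_pos.2 hlam).ne') hc.ne'
  have hgrow : Tendsto (fun N => (ENNReal.ofReal lam * r) ^ N *
      (ENNReal.ofReal lam ^ k * matPow μ k x x₀)) atTop (nhds ⊤) := by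
    rw [← ENNReal.top_mul hB]
    exact ENNReal.Tendsto.mul_const (ENNReal.tendsto_pow_atTop_nhds_top_iff.2 hL)
      (Or.inl ENNReal.top_ne_zero)
  obtain ⟨N, hN, hNgrow⟩ := ((ENNReal.frequently_pow_le_of_lt_limsup hr).and_eventually
    (hgrow.eventually (lt_mem_nhds ENNReal.one_lt_top))).exists
  rw [funext (expParticles_eq_poissonTransform μ hlam.le x₀ x)]
  refine tendsto_poissonTransform_of_mul_pow_le (pow_ne_zero N (zero_lt_one.trans hL).ne')
    hNgrow N (d := k + N) (by omega) fun j => ?_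
  calc (ENNReal.ofReal lam * r) ^ N * ((ENNReal.ofReal lam * r) ^ N *
        (ENNReal.ofReal lam ^ k * matPow μ k x x₀)) ^ j
      = (r ^ N * (matPow μ k x x₀ * r ^ N) ^ j) * ENNReal.ofReal lam ^ (N + j * (k + N)) := by
        ring
    _ ≤ (matPow μ N x₀ x * (matPow μ k x x₀ * matPow μ N x₀ x) ^ j) *
        ENNReal.ofReal lam ^ (N + j * (k + N)) := by gcongr
    _ ≤ matPow μ (N + j * (k + N)) x₀ x * ENNReal.ofReal lam ^ (N + j * (k + N)) := by
        gcongr; exact matPow_mul_pow_le μ N k j x₀ x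

/-- Lemma 5.2, supercritical part: on a connected weighted graph with
bounded row sums, if `λ > R_μ` then the expected number of particles at `x` tends to `+∞`. -/
theorem expParticles_tendsto_top_of_supercritical
    {X : Type*} [Countable X] [DecidableEq X]
    (μ : X → X → ℝ≥0∞) (hbdd : bddRows μ) (hconn : connectedW μ)
    (x₀ x : X) (lam : ℝ) (hlam : 0 < lam)
    (hsup : convR μ x₀ x < ENNReal.ofReal lam) :
    Tendsto (expParticles μ lam x₀ x) atTop (nhds (⊤ : ℝ≥0∞)) :=
  expParticles_tendsto_top_of_supercritical_general μ hconn x₀ x lam hsup
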